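/- Let c be a natural number and define f : ℕ → ℕ by f(0) = c and f(l+1) = 7*f(l) + 18*4^l. Then for all l, f(l) ≤ c*7^l + 6*(7^l - 4^l); in particular f(l) ≤ (c+6)*7^l. -/

import Mathlib

/-- Since `18 = 6 * (7 - 4)`, the shifted sequence `f l + 6 * 4 ^ l` is geometric with ratio `7`. -/
theorem strassen_recurrence_add_eq (c : ℕ) (f : ℕ → ℕ)
    (hf0 : f 0 = c) (hf : ∀ l, f (l + 1) = 7 * f l + 18 * 4 ^ l) (l : ℕ) :
    f l + 6 * 4 ^ l = (c + 6) * 7 ^ l := by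
  induction l with
  | zero => simp [hf0]
  | succ l ih =>
    calc f (l + 1) + 6 * 4 ^ (l + 1) = 7 * (f l + 6 * 4 ^ l) := by rw [hf, pow_succ]; ring
      _ = (c + 6) * 7 ^ (l + 1) := by rw [ih, pow_succ]; ring

/-- The Strassen operation-count recurrence `f(0) = c`, `f(l+1) = 7·f(l) + 18·4^l`
satisfies `f(l) ≤ c·7^l + 6·(7^l - 4^l) ≤ (c+6)·7^l`. -/
theorem strassen_recurrence_bound (c : ℕ) (f : ℕ → ℕ)
    (hf0 : f 0 = c) (hf : ∀ l, f (l + 1) = 7 * f l + 18 * 4 ^ l) :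
    ∀ l, f l ≤ c * 7 ^ l + 6 * (7 ^ l - 4 ^ l) ∧ f l ≤ (c + 6) * 7 ^ l := by
  intro l
  have h := strassen_recurrence_add_eq c f hf0 hf l
  have h47 : 4 ^ l ≤ 7 ^ l := Nat.pow_le_pow_left (by norm_num) l
  rw [add_mul] at h ⊢
  omega
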